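/- In a finite game graph, the limit α(P) = lim_{n→∞} α_n(P) exists for every position P, and the limit function α satisfies the Richman equation α(P) = (max_w α(P_w) + min_b α(P_b))/2 at every non-terminal position P. -/
import Mathlib


open Finset

/-- A finite game graph: each non-terminal position has nonempty finite sets of
White and Black options; terminal positions carry a value 0 (Black win) or 1 (White win). -/
structure GameGraph (P : Type) [Fintype P] [DecidableEq P] where
  terminal : P → Bool
  tval : P → ℝ
  tval01 : ∀ p, terminal p = true → tval p = 0 ∨ tval p = 1
  W : P → Finset P
  B : P → Finset P
  Wne : ∀ p, terminal p = false → (W p).Nonempty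
  Bne : ∀ p, terminal p = false → (B p).Nonempty

variable {P : Type} [Fintype P] [DecidableEq P]

/-- The thresholds `α_n`, with base value 0 at non-terminal positions. -/
noncomputable def GameGraph.alpha (G : GameGraph P) : ℕ → P → ℝ
  | 0, p => if G.terminal p then G.tval p else 0
  | n+1, p =>
    if h : G.terminal p = true then G.tval p
    else ((G.W p).sup' (G.Wne p (by simpa using h)) (G.alpha n)
        + (G.B p).inf' (G.Bne p (by simpa using h)) (G.alpha n)) / 2

/-- The thresholds `β_n`, with base value 1 at non-terminal positions. -/
noncomputable def GameGraph.beta (G : GameGraph P) : ℕ → P → ℝ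
  | 0, p => if G.terminal p then G.tval p else 1
  | n+1, p =>
    if h : G.terminal p = true then G.tval p
    else ((G.W p).sup' (G.Wne p (by simpa using h)) (G.beta n)
        + (G.B p).inf' (G.Bne p (by simpa using h)) (G.beta n)) / 2

noncomputable def GameGraph.alphaLim (G : GameGraph P) (p : P) : ℝ := ⨆ n, G.alpha n p

noncomputable def GameGraph.betaLim (G : GameGraph P) (p : P) : ℝ := ⨅ n, G.beta n p

/-- A Richman function: values in `[0,1]`, prescribed terminal values, and the
averaging equation at non-terminal positions. -/
def GameGraph.IsRichman (G : GameGraph P) (x : P → ℝ) : Prop :=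
  (∀ p, 0 ≤ x p ∧ x p ≤ 1) ∧
  (∀ p, G.terminal p = true → x p = G.tval p) ∧
  (∀ p, ∀ h : G.terminal p = false,
    x p = ((G.W p).sup' (G.Wne p h) x + (G.B p).inf' (G.Bne p h) x) / 2)


lemma GameGraph.alpha_le_one (G : GameGraph P) : ∀ n p, G.alpha n p ≤ 1 := by
  intro n
  induction n with
  | zero =>
    intro p
    simp only [GameGraph.alpha]
    split
    · rcases G.tval01 p (by assumption) with h | h <;> simp [h]
    · norm_num
  | succ n ih =>
    intro p
    simp only [GameGraph.alpha]
    split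
    · rcases G.tval01 p (by assumption) with h | h <;> simp [h]
    · rename_i h
      have h1 : (G.W p).sup' (G.Wne p (by simpa using h)) (G.alpha n) ≤ 1 :=
        Finset.sup'_le _ _ fun q _ => ih q
      have h2 : (G.B p).inf' (G.Bne p (by simpa using h)) (G.alpha n) ≤ 1 := by
        obtain ⟨q, hq⟩ := G.Bne p (by simpa using h)
        exact le_trans (Finset.inf'_le _ hq) (ih q)
      linarith

lemma GameGraph.alpha_nonneg (G : GameGraph P) : ∀ n p, 0 ≤ G.alpha n p := by
  intro n
  induction n with
  | zero =>
    intro p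
    simp only [GameGraph.alpha]
    split
    · rcases G.tval01 p (by assumption) with h | h <;> simp [h]
    · norm_num
  | succ n ih =>
    intro p
    by_cases h : G.terminal p = true
    · simp only [GameGraph.alpha, dif_pos h]
      rcases G.tval01 p h with h' | h' <;> simp [h']
    · simp only [GameGraph.alpha, dif_neg h]
      have h1 : (0:ℝ) ≤ (G.W p).sup' (G.Wne p (by simpa using h)) (G.alpha n) := by
        obtain ⟨q, hq⟩ := G.Wne p (by simpa using h)
        exact le_trans (ih q) (Finset.le_sup' _ hq)
      have h2 : (0:ℝ) ≤ (G.B p).inf' (G.Bne p (by simpa using h)) (G.alpha n) :=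
        Finset.le_inf' _ _ fun q _ => ih q
      linarith

lemma GameGraph.alpha_mono (G : GameGraph P) : ∀ n p, G.alpha n p ≤ G.alpha (n+1) p := by
  intro n
  induction n with
  | zero =>
    intro p
    by_cases h : G.terminal p = true
    · simp [GameGraph.alpha, h]
    · have h0 : G.alpha 0 p = 0 := by simp [GameGraph.alpha, h]
      rw [h0]
      exact G.alpha_nonneg 1 p
  | succ n ih =>
    intro p
    by_cases h : G.terminal p = true
    · simp [GameGraph.alpha, h]
    · show G.alpha (n+1) p ≤ G.alpha (n+2) p
      conv_lhs => rw [GameGraph.alpha]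
      conv_rhs => rw [GameGraph.alpha]
      rw [dif_neg h, dif_neg h]
      have h1 : (G.W p).sup' (G.Wne p (by simpa using h)) (G.alpha n)
          ≤ (G.W p).sup' (G.Wne p (by simpa using h)) (G.alpha (n+1)) :=
        Finset.sup'_le _ _ fun q hq => le_trans (ih q) (Finset.le_sup' _ hq)
      have h2 : (G.B p).inf' (G.Bne p (by simpa using h)) (G.alpha n)
          ≤ (G.B p).inf' (G.Bne p (by simpa using h)) (G.alpha (n+1)) :=
        Finset.le_inf' _ _ fun q hq => le_trans (Finset.inf'_le _ hq) (ih q)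
      linarith

lemma GameGraph.alpha_monotone (G : GameGraph P) (p : P) :
    Monotone (fun n => G.alpha n p) :=
  monotone_nat_of_le_succ fun n => G.alpha_mono n p

lemma GameGraph.alpha_tendsto (G : GameGraph P) (p : P) :
    Filter.Tendsto (fun n => G.alpha n p) Filter.atTop (nhds (G.alphaLim p)) :=
  tendsto_atTop_ciSup (G.alpha_monotone p) ⟨1, fun x ⟨n, hn⟩ => hn ▸ G.alpha_le_one n p⟩

/-- the limit `α(P) = lim_n α_n(P)` exists, and the limit function
satisfies the Richman equation at every non-terminal position. -/
theorem alphaLim_isLimit_and_richman (G : GameGraph P) :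
    (∀ p, Filter.Tendsto (fun n => G.alpha n p) Filter.atTop (nhds (G.alphaLim p))) ∧
    (∀ p, ∀ h : G.terminal p = false,
      G.alphaLim p
        = ((G.W p).sup' (G.Wne p h) G.alphaLim + (G.B p).inf' (G.Bne p h) G.alphaLim) / 2) := by
  refine ⟨G.alpha_tendsto, fun p h => ?_⟩
  have hL : Filter.Tendsto (fun n => G.alpha (n+1) p) Filter.atTop (nhds (G.alphaLim p)) :=
    (G.alpha_tendsto p).comp (Filter.tendsto_add_atTop_nat 1)
  have hR : Filter.Tendsto
      (fun n => ((G.W p).sup' (G.Wne p h) (G.alpha n)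
        + (G.B p).inf' (G.Bne p h) (G.alpha n)) / 2) Filter.atTop
      (nhds (((G.W p).sup' (G.Wne p h) G.alphaLim
        + (G.B p).inf' (G.Bne p h) G.alphaLim) / 2)) := by
    apply Filter.Tendsto.div_const
    exact Filter.Tendsto.add
      (Filter.Tendsto.finset_sup'_nhds_apply _ fun q _ => G.alpha_tendsto q)
      (Filter.Tendsto.finset_inf'_nhds_apply _ fun q _ => G.alpha_tendsto q)
  have heq : (fun n => G.alpha (n+1) p)
      = fun n => ((G.W p).sup' (G.Wne p h) (G.alpha n)
        + (G.B p).inf' (G.Bne p h) (G.alpha n)) / 2 := by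
    funext n
    simp only [GameGraph.alpha]
    rw [dif_neg (by simp [h])]
  rw [heq] at hL
  exact tendsto_nhds_unique hL hR
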